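/- Let G and G' be digraphs on the same number n of vertices with η_G = η_{G'} as polynomials in (x,t↑,t↓,u↑,u↓). Then G and G' have the same number m of edges, and for every invader S the invaded digraphs S ≻ G and S ≻ G' have equal characteristic polynomials: det(x·I_{n+mc} − A_{S≻G}) = det(x·I_{n+mc} − A_{S≻G'}) identically in x. -/

import Mathlib

/-!
List the vertices of `S ≻ G` as `V` followed by the invasive vertices. Then `x - A_{S≻G}` has
lower-right block `1_E ⊗ (x - A_C)`, and its off-diagonal blocks are built from the tail and head
incidence matrices `T, H ∈ ℂ^{V×E}` and the vectors `r_t, r_h, c_t, c_h`. If `N = (x - A_C)⁻¹`,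
the Schur complement of that block is a combination of `T Tᵀ = D^out`, `H Hᵀ = D^in`, `T Hᵀ = A`
and `H Tᵀ = Aᵀ`, which gives
`det (x - A_{S≻G}) = det (x - A_C) ^ m · η_G(x, -(a_tt + r_t N c_t), -(a_hh + r_h N c_h),
-(a_th + r_t N c_h), -(a_ht + r_h N c_t))`.
Hence the characteristic polynomials of `S ≻ G` and `S ≻ G'` agree away from the eigenvalues of
`A_C`, so everywhere. The number of edges `m = tr D^out` is read off `η_G(x, 1, 0, 0, 0)`, the
characteristic polynomial of `-D^out`.
-/

open Matrix

noncomputable section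
open scoped Classical

namespace Stmt10

/-- The adjacency matrix of the digraph with edge set `E`, tail map `t` and head map `h`. -/
def adjOf {V E : Type*} [Fintype E] (t h : E → V) : Matrix V V ℂ :=
  Matrix.of fun u v => ((Finset.univ.filter fun e => t e = u ∧ h e = v).card : ℂ)

/-- The out-degree matrix: diagonal matrix of row sums. -/
def doutOf {V : Type*} [Fintype V] [DecidableEq V] (A : Matrix V V ℂ) : Matrix V V ℂ :=
  Matrix.diagonal fun u => ∑ v, A u v

/-- The in-degree matrix: diagonal matrix of column sums. -/
def dinOf {V : Type*} [Fintype V] [DecidableEq V] (A : Matrix V V ℂ) : Matrix V V ℂ :=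
  Matrix.diagonal fun v => ∑ u, A u v

/-- The generalized characteristic polynomial
`η_G(x,t↑,t↓,u↑,u↓) = det(x·I + t↑·D^out + t↓·D^in + u↑·A + u↓·Aᵀ)`. -/
def eta {V : Type*} [Fintype V] [DecidableEq V] (A : Matrix V V ℂ)
    (x t₁ t₂ u₁ u₂ : ℂ) : ℂ :=
  (x • (1 : Matrix V V ℂ) + t₁ • doutOf A + t₂ • dinOf A + u₁ • A + u₂ • Aᵀ).det

/-- The adjacency matrix of the invaded digraph `S ≻ G`, where the invader `S` is given
by the data `a_tt, a_th, a_ht, a_hh`, row vectors `rt, rh`, column vectors `ct, ch`, and the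
adjacency matrix `AC` of the subdigraph induced on the `c` invasive vertices. -/
def invadedAdj {V E : Type*} [Fintype V] [DecidableEq V] [Fintype E] [DecidableEq E]
    (t h : E → V) (c : ℕ) (att ath aht ahh : ℕ) (rt rh : Fin c → ℕ) (ct ch : Fin c → ℕ)
    (AC : Matrix (Fin c) (Fin c) ℕ) :
    Matrix (V ⊕ E × Fin c) (V ⊕ E × Fin c) ℂ :=
  Matrix.of fun i j =>
    match i, j with
    | Sum.inl u, Sum.inl v =>
        ((att : ℂ) • doutOf (adjOf t h) + (ahh : ℂ) • dinOf (adjOf t h)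
          + (ath : ℂ) • adjOf t h + (aht : ℂ) • (adjOf t h)ᵀ) u v
    | Sum.inl w, Sum.inr (e, j) =>
        (if w = t e then (rt j : ℂ) else 0) + (if w = h e then (rh j : ℂ) else 0)
    | Sum.inr (e, j), Sum.inl w =>
        (if w = t e then (ct j : ℂ) else 0) + (if w = h e then (ch j : ℂ) else 0)
    | Sum.inr (e, j), Sum.inr (e', j') => if e = e' then (AC j j' : ℂ) else 0

end Stmt10

open Polynomial
open scoped Kronecker

namespace Stmt10

theorem doutOf_eq_diagonal_mulVec {V : Type*} [Fintype V] [DecidableEq V] (A : Matrix V V ℂ) :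
    doutOf A = diagonal (A *ᵥ 1) := by
  simp [doutOf, mulVec, dotProduct]

theorem dinOf_eq_diagonal_vecMul {V : Type*} [Fintype V] [DecidableEq V] (A : Matrix V V ℂ) :
    dinOf A = diagonal (1 ᵥ* A) := by
  simp [dinOf, vecMul, dotProduct]

section incidence

variable {V E : Type*} [DecidableEq V] [Fintype E]

def incMatrix (f : E → V) : Matrix V E ℂ :=
  of fun v e => if v = f e then 1 else 0

theorem adjOf_eq_incMatrix_mul (t h : E → V) : adjOf t h = incMatrix t * (incMatrix h)ᵀ := by
  ext u v
  simp only [adjOf, incMatrix, of_apply, mul_apply, transpose_apply, Finset.natCast_card_filter]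
  refine Finset.sum_congr rfl fun e _ => ?_
  grind

omit [Fintype E] in
theorem one_vecMul_incMatrix [Fintype V] (f : E → V) : 1 ᵥ* incMatrix f = 1 := by
  ext e
  simp [incMatrix, vecMul, dotProduct]

theorem incMatrix_mul_transpose_self (f : E → V) :
    incMatrix f * (incMatrix f)ᵀ = diagonal (incMatrix f *ᵥ 1) := by
  ext u v
  simp only [incMatrix, mul_apply, transpose_apply, of_apply, diagonal_apply, mulVec, dotProduct,
    Pi.one_apply, mul_one]
  split_ifs with huv
  · subst huv
    refine Finset.sum_congr rfl fun e _ => ?_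
    grind
  · refine Finset.sum_eq_zero fun e _ => ?_
    grind

theorem doutOf_adjOf [Fintype V] (t h : E → V) :
    doutOf (adjOf t h) = incMatrix t * (incMatrix t)ᵀ := by
  rw [doutOf_eq_diagonal_mulVec, adjOf_eq_incMatrix_mul, ← mulVec_mulVec, mulVec_transpose,
    one_vecMul_incMatrix, incMatrix_mul_transpose_self]

theorem dinOf_adjOf [Fintype V] (t h : E → V) :
    dinOf (adjOf t h) = incMatrix h * (incMatrix h)ᵀ := by
  rw [dinOf_eq_diagonal_vecMul, adjOf_eq_incMatrix_mul, ← vecMul_vecMul, one_vecMul_incMatrix,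
    vecMul_transpose, incMatrix_mul_transpose_self]

theorem trace_doutOf_adjOf [Fintype V] (t h : E → V) :
    trace (doutOf (adjOf t h)) = Fintype.card E := by
  rw [doutOf_eq_diagonal_mulVec, trace_diagonal, ← one_dotProduct, adjOf_eq_incMatrix_mul,
    ← mulVec_mulVec, mulVec_transpose, one_vecMul_incMatrix, dotProduct_mulVec,
    one_vecMul_incMatrix, one_dotProduct_one]

end incidence

theorem eval_charpoly_eq_det {R n : Type*} [CommRing R] [Fintype n] [DecidableEq n]
    (M : Matrix n n R) (x : R) :
    M.charpoly.eval x = det (x • 1 - M) := by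
  rw [eval_charpoly, scalar_apply, smul_one_eq_diagonal]

theorem eq_of_eval_eq_of_eval_ne_zero {R : Type*} [CommRing R] [IsDomain R] [Infinite R]
    {p q r : R[X]} (hr : r ≠ 0) (h : ∀ y, r.eval y ≠ 0 → p.eval y = q.eval y) : p = q := by
  refine mul_right_cancel₀ hr (Polynomial.funext fun y => ?_)
  by_cases hy : r.eval y = 0
  · simp [hy]
  · simp [h y hy]

theorem card_eq_of_eta_eq {V E E' : Type*} [Fintype V] [DecidableEq V] [Fintype E] [Fintype E']
    {t h : E → V} {t' h' : E' → V}
    (heta : ∀ x, eta (adjOf t h) x 1 0 0 0 = eta (adjOf t' h') x 1 0 0 0) :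
    Fintype.card E = Fintype.card E' := by
  have eval_charpoly_neg_doutOf (A : Matrix V V ℂ) (x : ℂ) :
      (-doutOf A).charpoly.eval x = eta A x 1 0 0 0 := by
    simp [eval_charpoly_eq_det, eta]
  have hcharpoly : (-doutOf (adjOf t h)).charpoly = (-doutOf (adjOf t' h')).charpoly :=
    Polynomial.funext fun x => by rw [eval_charpoly_neg_doutOf, eval_charpoly_neg_doutOf, heta]
  have htrace := congr_arg (fun p => -p.nextCoeff) hcharpoly
  simp only [← trace_eq_neg_charpoly_nextCoeff, trace_neg, trace_doutOf_adjOf, neg_inj] at htrace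
  exact_mod_cast htrace

section invader

variable {V E : Type*} [DecidableEq V] [Fintype E] {c : ℕ}

def edgeBlock (f : E → V) (r : Fin c → ℂ) : Matrix V (E × Fin c) ℂ :=
  of fun w p => incMatrix f w p.1 * r p.2

theorem edgeBlock_mul_one_kronecker [DecidableEq E] (f : E → V) (r : Fin c → ℂ)
    (N : Matrix (Fin c) (Fin c) ℂ) :
    edgeBlock f r * ((1 : Matrix E E ℂ) ⊗ₖ N) = edgeBlock f (r ᵥ* N) := by
  ext w ⟨e, j⟩
  simp [edgeBlock, mul_apply, Fintype.sum_prod_type, one_apply, vecMul, dotProduct,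
    Finset.mul_sum, mul_assoc]

theorem edgeBlock_mul_transpose (f g : E → V) (r s : Fin c → ℂ) :
    edgeBlock f r * (edgeBlock g s)ᵀ = (r ⬝ᵥ s) • (incMatrix f * (incMatrix g)ᵀ) := by
  ext w w'
  simp only [edgeBlock, mul_apply, transpose_apply, of_apply, Matrix.smul_apply, smul_eq_mul,
    Fintype.sum_prod_type, dotProduct, Finset.sum_mul, Finset.mul_sum]
  exact Finset.sum_congr rfl fun e _ => Finset.sum_congr rfl fun j _ => by ring

theorem invadedAdj_eq_fromBlocks [Fintype V] [DecidableEq E] (t h : E → V)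
    (att ath aht ahh : ℕ) (rt rh ct ch : Fin c → ℕ) (AC : Matrix (Fin c) (Fin c) ℕ) :
    invadedAdj t h c att ath aht ahh rt rh ct ch AC =
      fromBlocks ((att : ℂ) • doutOf (adjOf t h) + (ahh : ℂ) • dinOf (adjOf t h)
          + (ath : ℂ) • adjOf t h + (aht : ℂ) • (adjOf t h)ᵀ)
        (edgeBlock t (Nat.cast ∘ rt) + edgeBlock h (Nat.cast ∘ rh))
        ((edgeBlock t (Nat.cast ∘ ct))ᵀ + (edgeBlock h (Nat.cast ∘ ch))ᵀ)
        (1 ⊗ₖ AC.map Nat.cast) := by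
  ext (u | ⟨e, j⟩) (v | ⟨e', j'⟩) <;>
    simp [invadedAdj, edgeBlock, incMatrix, one_apply]

theorem det_smul_one_sub_invadedAdj [Fintype V] [DecidableEq E] (t h : E → V)
    {att ath aht ahh : ℕ} {rt rh ct ch : Fin c → ℕ} {AC : Matrix (Fin c) (Fin c) ℕ} {x : ℂ}
    {N : Matrix (Fin c) (Fin c) ℂ} (hN : (x • 1 - AC.map Nat.cast) * N = 1) :
    det (x • 1 - invadedAdj t h c att ath aht ahh rt rh ct ch AC) =
      det (x • 1 - AC.map Nat.cast) ^ Fintype.card E *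
        eta (adjOf t h) x
          (-(att + (Nat.cast ∘ rt) ᵥ* N ⬝ᵥ (Nat.cast ∘ ct)))
          (-(ahh + (Nat.cast ∘ rh) ᵥ* N ⬝ᵥ (Nat.cast ∘ ch)))
          (-(ath + (Nat.cast ∘ rt) ᵥ* N ⬝ᵥ (Nat.cast ∘ ch)))
          (-(aht + (Nat.cast ∘ rh) ᵥ* N ⬝ᵥ (Nat.cast ∘ ct))) := by
  set M : Matrix (Fin c) (Fin c) ℂ := x • 1 - AC.map Nat.cast
  have hkron : x • 1 - (1 : Matrix E E ℂ) ⊗ₖ AC.map Nat.cast = 1 ⊗ₖ M := by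
    ext ⟨e, j⟩ ⟨e', j'⟩
    by_cases he : e = e' <;> by_cases hj : j = j' <;> simp [M, one_apply, he, hj]
  have hkronN : (1 : Matrix E E ℂ) ⊗ₖ M * (1 ⊗ₖ N) = 1 := by
    rw [← mul_kronecker_mul, one_mul, hN, one_kronecker_one]
  let := invertibleOfRightInverse _ _ hkronN
  rw [invadedAdj_eq_fromBlocks, ← fromBlocks_one, fromBlocks_smul, sub_eq_add_neg, fromBlocks_neg,
    fromBlocks_add]
  simp only [smul_zero, zero_sub, ← sub_eq_add_neg]
  rw [hkron, det_fromBlocks₂₂, invOf_eq_right_inv hkronN, det_kronecker, det_one, one_pow, one_mul]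
  congr 1
  simp only [Matrix.neg_mul, Matrix.mul_neg, Matrix.add_mul, Matrix.mul_add,
    edgeBlock_mul_one_kronecker, edgeBlock_mul_transpose]
  rw [eta, doutOf_adjOf, dinOf_adjOf, adjOf_eq_incMatrix_mul, transpose_mul, transpose_transpose]
  congr 1
  module

end invader

end Stmt10

open Stmt10

/-- Digraphs with equal generalized characteristic polynomials have the
same number of edges and cospectral invaded digraphs for every invader `S`. -/
theorem stmt_10 {n : ℕ} {E E' : Type*} [Fintype E] [DecidableEq E] [Fintype E'] [DecidableEq E']
    (t h : E → Fin n) (t' h' : E' → Fin n)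
    (heta : ∀ x t₁ t₂ u₁ u₂ : ℂ,
      eta (adjOf t h) x t₁ t₂ u₁ u₂ = eta (adjOf t' h') x t₁ t₂ u₁ u₂) :
    Fintype.card E = Fintype.card E' ∧
      ∀ (c : ℕ) (att ath aht ahh : ℕ) (rt rh : Fin c → ℕ) (ct ch : Fin c → ℕ)
        (AC : Matrix (Fin c) (Fin c) ℕ) (x : ℂ),
        (x • (1 : Matrix (Fin n ⊕ E × Fin c) (Fin n ⊕ E × Fin c) ℂ)
          - invadedAdj t h c att ath aht ahh rt rh ct ch AC).det =
        (x • (1 : Matrix (Fin n ⊕ E' × Fin c) (Fin n ⊕ E' × Fin c) ℂ)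
          - invadedAdj t' h' c att ath aht ahh rt rh ct ch AC).det := by
  have hcard : Fintype.card E = Fintype.card E' := card_eq_of_eta_eq fun x => heta x 1 0 0 0
  refine ⟨hcard, fun c att ath aht ahh rt rh ct ch AC x => ?_⟩
  have hcharpoly : (invadedAdj t h c att ath aht ahh rt rh ct ch AC).charpoly =
      (invadedAdj t' h' c att ath aht ahh rt rh ct ch AC).charpoly := by
    refine eq_of_eval_eq_of_eval_ne_zero (charpoly_monic (AC.map Nat.cast)).ne_zero fun y hy => ?_
    rw [eval_charpoly_eq_det] at hy
    have hN := mul_nonsing_inv _ (isUnit_iff_ne_zero.mpr hy)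
    rw [eval_charpoly_eq_det, eval_charpoly_eq_det, det_smul_one_sub_invadedAdj t h hN,
      det_smul_one_sub_invadedAdj t' h' hN, hcard, heta]
  simpa only [eval_charpoly_eq_det] using congr_arg (eval x) hcharpoly
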